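/- arXiv:1503.07826 — 6 statements merged into one kernel-verified Lean document; each statement's English description precedes it below -/
import Mathlib

section
/- Sklar's theorem (existence): Let N be a positive integer and let μ be a probability measure on ℝ^N with joint CDF F(x) = μ{y : y_i ≤ x_i for all i} and with marginal CDFs F_1, …, F_N (the CDFs of the pushforwards of μ under the coordinate projections), each of which is continuous. Then there exists a copula measure ν on [0,1]^N such that for every x ∈ ℝ^N, F(x) = ν{u : u_i ≤ F_i(x_i) for all i}. -/
/-! Push `μ` forward along `y ↦ (Fᵢ (y i))ᵢ`. Each continuous `Fᵢ` carries the `i`-th marginal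
to the uniform law on `[0,1]` (probability integral transform), so the image is a copula. The
preimage of `{u | ∀ i, u i ≤ Fᵢ (x i)}` is the orthant below `x` enlarged by the stretches where
some `Fᵢ` is flat to the right of `x i`; these carry no mass, so both sets have the same measure. -/

open MeasureTheory

/-- A copula measure on `[0,1]^N`: a probability measure on `ℝ^N` concentrated on the unit
cube whose one-dimensional marginals are all uniform on `[0,1]`. -/
def IsCopulaMeasure (N : ℕ) (ν : Measure (Fin N → ℝ)) : Prop :=
  IsProbabilityMeasure ν ∧
    ν (Set.univ.pi fun _ => Set.Icc (0 : ℝ) 1) = 1 ∧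
    ∀ i : Fin N, ν.map (fun u => u i) = volume.restrict (Set.Icc (0 : ℝ) 1)

open ProbabilityTheory Set Filter

section ContinuousCDF

variable {m : Measure ℝ} [IsProbabilityMeasure m]

lemma measure_cdf_le_le_ofReal (hF : Continuous (cdf m)) (s : ℝ) :
    m {t | cdf m t ≤ s} ≤ ENNReal.ofReal s := by
  -- `S` is a closed lower set: empty, all of `ℝ`, or `Iic (sSup S)`.
  set S := {t | cdf m t ≤ s}
  rcases S.eq_empty_or_nonempty with hS | hS
  · simp [hS]
  by_cases hbdd : BddAbove S
  · have hmax : sSup S ∈ S := (isClosed_Iic.preimage hF).csSup_mem hS hbdd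
    calc m S ≤ m (Iic (sSup S)) := measure_mono fun t ht => le_csSup hbdd ht
      _ = ENNReal.ofReal (cdf m (sSup S)) := (ofReal_cdf m _).symm
      _ ≤ ENNReal.ofReal s := ENNReal.ofReal_le_ofReal hmax
  · have hle : ∀ t, cdf m t ≤ s := fun t => by
      obtain ⟨u, huS, htu⟩ := not_bddAbove_iff.mp hbdd t
      exact (monotone_cdf m htu.le).trans huS
    have h1s : 1 ≤ s := le_of_tendsto (tendsto_cdf_atTop m) (Eventually.of_forall hle)
    calc m S ≤ 1 := prob_le_one
      _ ≤ ENNReal.ofReal s := by rwa [← ENNReal.ofReal_one, ENNReal.ofReal_le_ofReal_iff]; linarith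

lemma ofReal_le_measure_cdf_le (hF : Continuous (cdf m)) {s : ℝ} (hs : s < 1) :
    ENNReal.ofReal s ≤ m {t | cdf m t ≤ s} := by
  rcases le_or_gt s 0 with hs0 | hs0
  · simp [ENNReal.ofReal_eq_zero.mpr hs0]
  obtain ⟨a, rfl⟩ : s ∈ range (cdf m) := mem_range_of_exists_le_of_exists_ge hF
    ((tendsto_cdf_atBot m).eventually_le_const hs0).exists
    ((tendsto_cdf_atTop m).eventually_const_le hs).exists
  rw [ofReal_cdf]
  exact measure_mono fun t ht => monotone_cdf m ht

/-- Probability integral transform. -/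
lemma map_cdf_eq_restrict_Icc (hF : Continuous (cdf m)) :
    m.map (cdf m) = volume.restrict (Icc 0 1) := by
  have : IsProbabilityMeasure (m.map (cdf m)) := Measure.isProbabilityMeasure_map hF.aemeasurable
  refine Measure.ext_of_Iic _ _ fun s => ?_
  have hIcc : Iic s ∩ Icc (0 : ℝ) 1 = Icc 0 (min s 1) := by
    ext t
    simp only [mem_inter_iff, mem_Iic, mem_Icc, le_min_iff]
    tauto
  rw [Measure.map_apply hF.measurable measurableSet_Iic,
    Measure.restrict_apply measurableSet_Iic, hIcc, Real.volume_Icc, sub_zero]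
  rcases lt_or_ge s 1 with hs1 | hs1
  · rw [min_eq_left hs1.le]
    exact le_antisymm (measure_cdf_le_le_ofReal hF s) (ofReal_le_measure_cdf_le hF hs1)
  · have huniv : cdf m ⁻¹' Iic s = univ := eq_univ_of_forall fun t => (cdf_le_one m t).trans hs1
    rw [huniv, measure_univ, min_eq_right hs1, ENNReal.ofReal_one]

lemma Iic_ae_eq_cdf_le_cdf (hF : Continuous (cdf m)) (a : ℝ) :
    Iic a =ᵐ[m] {t | cdf m t ≤ cdf m a} :=
  ae_eq_of_subset_of_measure_ge (fun _ ht => monotone_cdf m ht)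
    ((measure_cdf_le_le_ofReal hF _).trans_eq (ofReal_cdf m a))
    measurableSet_Iic.nullMeasurableSet (measure_ne_top _ _)

end ContinuousCDF

section Marginals

variable {ι : Type*} (μ : Measure (ι → ℝ))

instance isProbabilityMeasure_map_eval [IsProbabilityMeasure μ] (i : ι) :
    IsProbabilityMeasure (μ.map fun y => y i) :=
  Measure.isProbabilityMeasure_map (measurable_pi_apply i).aemeasurable

noncomputable def cdfTransform (y : ι → ℝ) (i : ι) : ℝ := cdf (μ.map fun z => z i) (y i)

lemma measurable_cdfTransform : Measurable (cdfTransform μ) :=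
  measurable_pi_lambda _ fun i => (monotone_cdf _).measurable.comp (measurable_pi_apply i)

variable {μ} [IsProbabilityMeasure μ]

lemma map_cdfTransform_apply_le [Countable ι] (hF : ∀ i, Continuous (cdf (μ.map fun y => y i)))
    (x : ι → ℝ) :
    μ.map (cdfTransform μ) {u | ∀ i, u i ≤ cdf (μ.map fun y => y i) (x i)} =
      μ {y | ∀ i, y i ≤ x i} := by
  rw [Measure.map_apply (measurable_cdfTransform μ), ofPred_forall, ofPred_forall, preimage_iInter]
  · refine (measure_congr (Filter.EventuallyEq.countable_iInter fun i => ?_)).symm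
    exact ae_eq_comp (measurable_pi_apply i).aemeasurable (Iic_ae_eq_cdf_le_cdf (hF i) (x i))
  · exact measurableSet_Iic (a := fun i => cdf (μ.map fun y => y i) (x i))

lemma map_eval_map_cdfTransform (hF : ∀ i, Continuous (cdf (μ.map fun y => y i))) (i : ι) :
    (μ.map (cdfTransform μ)).map (fun u => u i) = volume.restrict (Icc 0 1) := by
  rw [Measure.map_map (measurable_pi_apply i) (measurable_cdfTransform μ),
    ← map_cdf_eq_restrict_Icc (hF i), Measure.map_map (hF i).measurable (measurable_pi_apply i)]
  rfl

end Marginals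

lemma isCopulaMeasure_map_cdfTransform {N : ℕ} {μ : Measure (Fin N → ℝ)} [IsProbabilityMeasure μ]
    (hF : ∀ i, Continuous (cdf (μ.map fun y => y i))) :
    IsCopulaMeasure N (μ.map (cdfTransform μ)) := by
  refine ⟨Measure.isProbabilityMeasure_map (measurable_cdfTransform μ).aemeasurable, ?_,
    map_eval_map_cdfTransform hF⟩
  rw [Measure.map_apply (measurable_cdfTransform μ) (.univ_pi fun _ => measurableSet_Icc)]
  have hcube : cdfTransform μ ⁻¹' univ.pi (fun _ => Icc 0 1) = univ :=
    eq_univ_of_forall fun y i _ => ⟨cdf_nonneg _ _, cdf_le_one _ _⟩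
  rw [hcube, measure_univ]

theorem sklar_existence_general (N : ℕ) (μ : Measure (Fin N → ℝ))
    [IsProbabilityMeasure μ]
    (hcont : ∀ i : Fin N,
      Continuous fun x : ℝ => ((μ.map fun y => y i) (Set.Iic x)).toReal) :
    ∃ ν : Measure (Fin N → ℝ), IsCopulaMeasure N ν ∧
      ∀ x : Fin N → ℝ,
        μ {y | ∀ i, y i ≤ x i} =
          ν {u | ∀ i, u i ≤ ((μ.map fun y => y i) (Set.Iic (x i))).toReal} := by
  simp only [← measureReal_def, ← cdf_eq_real] at hcont ⊢
  exact ⟨μ.map (cdfTransform μ), isCopulaMeasure_map_cdfTransform hcont,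
    fun x => (map_cdfTransform_apply_le hcont x).symm⟩

/-- Sklar's theorem (existence): if the marginal CDFs of a probability measure `μ` on `ℝ^N`
are all continuous, then there exists a copula measure `ν` on `[0,1]^N` such that for every
`x`, the joint CDF of `μ` at `x` equals `ν {u | ∀ i, u i ≤ Fᵢ (x i)}`, where `Fᵢ` is the
`i`-th marginal CDF of `μ`. -/
theorem sklar_existence (N : ℕ) (hN : 0 < N) (μ : Measure (Fin N → ℝ))
    [IsProbabilityMeasure μ]
    (hcont : ∀ i : Fin N,
      Continuous fun x : ℝ => ((μ.map fun y => y i) (Set.Iic x)).toReal) :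
    ∃ ν : Measure (Fin N → ℝ), IsCopulaMeasure N ν ∧
      ∀ x : Fin N → ℝ,
        μ {y | ∀ i, y i ≤ x i} =
          ν {u | ∀ i, u i ≤ ((μ.map fun y => y i) (Set.Iic (x i))).toReal} :=
  sklar_existence_general N μ hcont
end

section
/- Sklar's theorem (uniqueness for continuous marginals): Let μ be a probability measure on ℝ^N whose marginal CDFs F_1, …, F_N are all continuous. If ν and ν′ are two copula measures on [0,1]^N each satisfying the Sklar equation μ{y : y_i ≤ x_i for all i} = ν{u : u_i ≤ F_i(x_i) for all i} (and likewise for ν′) for every x ∈ ℝ^N, then ν = ν′. -/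
open MeasureTheory

/-!
The vectors `(F_i(x_i))_i` fill the open cube `(0,1)^N`, because each marginal CDF `F_i` is
continuous with limits `0` and `1`; so the Sklar equation makes the CDFs of `ν` and `ν'` agree
there. Uniform marginals make the CDF of a copula measure Lipschitz, hence the two CDFs agree on
the closed cube, and then everywhere, since clamping the argument into `[0,1]^N` changes the CDF
of a copula measure only by null sets. Lower orthants form a π-system generating the Borel
σ-algebra of `ℝ^N`, so the CDF determines a finite measure.
-/

open Set ProbabilityTheory

theorem isPiSystem_Iic_of_semilatticeInf {α : Type*} [SemilatticeInf α] :
    IsPiSystem (range (Iic : α → Set α)) := by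
  rintro _ ⟨a, rfl⟩ _ ⟨b, rfl⟩ -
  exact ⟨a ⊓ b, Iic_inter_Iic.symm⟩

theorem MeasurableSpace.pi_eq_generateFrom_range_Iic {ι : Type*} [Finite ι] :
    (MeasurableSpace.pi : MeasurableSpace (ι → ℝ)) = generateFrom (range Iic) := by
  have hboxes : Set.pi univ '' Set.pi univ (fun _ : ι => range (Iic : ℝ → Set ℝ)) = range Iic := by
    ext s
    constructor
    · rintro ⟨t, ht, rfl⟩
      choose a ha using fun i => ht i (mem_univ i)
      exact ⟨a, by rw [← funext ha, pi_univ_Iic]⟩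
    · rintro ⟨a, rfl⟩
      exact ⟨fun i => Iic (a i), fun i _ => mem_range_self _, pi_univ_Iic a⟩
  rw [← hboxes]
  refine (generateFrom_eq_pi (fun _ => (borel_eq_generateFrom_Iic ℝ).symm) fun _ => ?_).symm
  exact ⟨fun n => Iic (n : ℝ), fun n => mem_range_self _,
    eq_univ_of_forall fun x => mem_iUnion.2 (exists_nat_ge x)⟩

theorem MeasureTheory.Measure.ext_of_Iic_pi {ι : Type*} [Finite ι] (μ ν : Measure (ι → ℝ))
    [IsFiniteMeasure μ] (h : ∀ a, μ (Iic a) = ν (Iic a)) : μ = ν := by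
  refine ext_of_generateFrom_of_iUnion _ (fun n => Iic fun _ => (n : ℝ))
    MeasurableSpace.pi_eq_generateFrom_range_Iic isPiSystem_Iic_of_semilatticeInf ?_
    (fun n => mem_range_self _) (fun _ => measure_ne_top _ _) ?_
  · refine eq_univ_of_forall fun u => mem_iUnion.2 ?_
    exact (Filter.eventually_all.2 fun i =>
      tendsto_natCast_atTop_atTop.eventually_ge_atTop (u i)).exists
  · rintro _ ⟨a, rfl⟩
    exact h a

theorem volume_restrict_Icc_Ioc_le (x y : ℝ) :
    volume.restrict (Icc (0 : ℝ) 1) (Ioc x y) ≤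
      ENNReal.ofReal (projIcc 0 1 zero_le_one y - projIcc 0 1 zero_le_one x) := by
  rw [Measure.restrict_apply measurableSet_Ioc, ← Real.volume_Icc]
  refine measure_mono fun z ⟨hxz, hz⟩ => ?_
  have hproj : (projIcc 0 1 zero_le_one z : ℝ) = z := by rw [projIcc_of_mem _ hz]
  rw [← hproj]
  exact ⟨monotone_projIcc _ hxz.1.le, monotone_projIcc _ hxz.2⟩

namespace IsCopulaMeasure

variable {N : ℕ} {ν : Measure (Fin N → ℝ)}

theorem measure_Iic_le_add (hν : IsCopulaMeasure N ν) (a c : Fin N → ℝ) :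
    ν (Iic a) ≤ ν (Iic c) + ∑ i, volume.restrict (Icc (0 : ℝ) 1) (Ioc (c i) (a i)) := by
  have hcover : Iic a ⊆ Iic c ∪ ⋃ i, (fun u : Fin N → ℝ => u i) ⁻¹' Ioc (c i) (a i) := by
    intro u hu
    by_cases huc : ∀ i, u i ≤ c i
    · exact Or.inl huc
    · push Not at huc
      obtain ⟨i, hi⟩ := huc
      exact Or.inr (mem_iUnion.2 ⟨i, hi, hu i⟩)
  calc ν (Iic a) ≤ ν (Iic c) + ν (⋃ i, (fun u : Fin N → ℝ => u i) ⁻¹' Ioc (c i) (a i)) :=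
        (measure_mono hcover).trans (measure_union_le _ _)
    _ ≤ ν (Iic c) + ∑ i, ν ((fun u : Fin N → ℝ => u i) ⁻¹' Ioc (c i) (a i)) :=
        by gcongr; exact measure_iUnion_fintype_le _ _
    _ = ν (Iic c) + ∑ i, volume.restrict (Icc (0 : ℝ) 1) (Ioc (c i) (a i)) := by
        congr 1
        refine Finset.sum_congr rfl fun i _ => ?_
        rw [← hν.2.2 i, Measure.map_apply (measurable_pi_apply i) measurableSet_Ioc]

theorem measure_Iic_projIcc (hν : IsCopulaMeasure N ν) (a : Fin N → ℝ) :
    ν (Iic a) = ν (Iic fun i => (projIcc 0 1 zero_le_one (a i) : ℝ)) := by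
  have hnull (x y : ℝ) (hxy : projIcc 0 1 zero_le_one x = projIcc 0 1 zero_le_one y) :
      volume.restrict (Icc (0 : ℝ) 1) (Ioc x y) = 0 :=
    nonpos_iff_eq_zero.1 <| (volume_restrict_Icc_Ioc_le x y).trans_eq <| by simp [hxy]
  set p : Fin N → ℝ := fun i => projIcc 0 1 zero_le_one (a i)
  refine le_antisymm ((hν.measure_Iic_le_add a p).trans_eq ?_)
    ((hν.measure_Iic_le_add p a).trans_eq ?_)
  all_goals rw [Finset.sum_eq_zero fun i _ => hnull _ _ (by simp [p]), add_zero]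

theorem lipschitzWith_measureReal_Iic (hν : IsCopulaMeasure N ν) :
    LipschitzWith N fun a => ν.real (Iic a) := by
  have := hν.1
  refine LipschitzWith.of_le_add_mul _ fun a c => ?_
  have hcoord (i : Fin N) : volume.restrict (Icc (0 : ℝ) 1) (Ioc (c i) (a i)) ≤
      ENNReal.ofReal (dist a c) := by
    refine (volume_restrict_Icc_Ioc_le _ _).trans (ENNReal.ofReal_le_ofReal ?_)
    exact (le_abs_self _).trans ((abs_projIcc_sub_projIcc _).trans (dist_le_pi_dist a c i))
  have hbound : ν (Iic a) ≤ ν (Iic c) + ENNReal.ofReal (N * dist a c) := by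
    calc ν (Iic a) ≤ ν (Iic c) + ∑ _i : Fin N, ENNReal.ofReal (dist a c) :=
          (hν.measure_Iic_le_add a c).trans (by gcongr with i; exact hcoord i)
      _ = ν (Iic c) + ENNReal.ofReal (N * dist a c) := by
          rw [Finset.sum_const, Finset.card_univ, Fintype.card_fin, nsmul_eq_mul,
            ENNReal.ofReal_mul (Nat.cast_nonneg _), ENNReal.ofReal_natCast]
  have := ENNReal.toReal_mono (by finiteness) hbound
  rwa [ENNReal.toReal_add (measure_ne_top _ _) ENNReal.ofReal_ne_top,
    ENNReal.toReal_ofReal (by positivity)] at this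

theorem ext_of_measure_Iic_eq {ν' : Measure (Fin N → ℝ)} (hν : IsCopulaMeasure N ν)
    (hν' : IsCopulaMeasure N ν')
    (h : ∀ a ∈ univ.pi fun _ => Ioo (0 : ℝ) 1, ν (Iic a) = ν' (Iic a)) : ν = ν' := by
  have := hν.1
  have := hν'.1
  have hreal : EqOn (fun a => ν.real (Iic a)) (fun a => ν'.real (Iic a))
      (univ.pi fun _ => Icc (0 : ℝ) 1) := by
    have := EqOn.closure (fun a ha => congrArg ENNReal.toReal (h a ha))
      hν.lipschitzWith_measureReal_Iic.continuous hν'.lipschitzWith_measureReal_Iic.continuous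
    rw [closure_pi_set] at this
    simp only [closure_Ioo (zero_ne_one' ℝ)] at this
    exact this
  refine Measure.ext_of_Iic_pi ν ν' fun a => ?_
  rw [hν.measure_Iic_projIcc, hν'.measure_Iic_projIcc, ← ofReal_measureReal, ← ofReal_measureReal]
  exact congrArg ENNReal.ofReal (hreal fun i _ => (projIcc 0 1 zero_le_one (a i)).2)

end IsCopulaMeasure

theorem ProbabilityTheory.Ioo_subset_range_cdf_of_continuous (μ : Measure ℝ)
    (hμ : Continuous (cdf μ)) : Ioo 0 1 ⊆ range (cdf μ) := fun _ hp =>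
  mem_range_of_exists_le_of_exists_ge hμ
    ((tendsto_cdf_atBot μ).eventually (eventually_le_nhds hp.1)).exists
    ((tendsto_cdf_atTop μ).eventually (eventually_ge_nhds hp.2)).exists

/-- Sklar's theorem (uniqueness for continuous marginals): if the marginal CDFs of a
probability measure `μ` on `ℝ^N` are all continuous, then any two copula measures
satisfying the Sklar equation for `μ` coincide. -/
theorem sklar_uniqueness (N : ℕ) (μ : Measure (Fin N → ℝ)) [IsProbabilityMeasure μ]
    (hcont : ∀ i : Fin N,
      Continuous fun x : ℝ => ((μ.map fun y => y i) (Set.Iic x)).toReal)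
    (ν ν' : Measure (Fin N → ℝ))
    (hν : IsCopulaMeasure N ν) (hν' : IsCopulaMeasure N ν')
    (hSklar : ∀ x : Fin N → ℝ,
      μ {y | ∀ i, y i ≤ x i} =
        ν {u | ∀ i, u i ≤ ((μ.map fun y => y i) (Set.Iic (x i))).toReal})
    (hSklar' : ∀ x : Fin N → ℝ,
      μ {y | ∀ i, y i ≤ x i} =
        ν' {u | ∀ i, u i ≤ ((μ.map fun y => y i) (Set.Iic (x i))).toReal}) :
    ν = ν' := by
  have hcdf (i : Fin N) (x : ℝ) :
      ((μ.map fun y => y i) (Iic x)).toReal = cdf (μ.map fun y => y i) x := by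
    have := Measure.isProbabilityMeasure_map (μ := μ) (measurable_pi_apply i).aemeasurable
    rw [cdf_eq_real, measureReal_def]
  refine hν.ext_of_measure_Iic_eq hν' fun a ha => ?_
  choose x hx using fun i => Ioo_subset_range_cdf_of_continuous _
    (by simpa only [hcdf] using hcont i) (ha i (mem_univ i))
  have hIic : Iic a = {u | ∀ i, u i ≤ ((μ.map fun y => y i) (Iic (x i))).toReal} := by
    simp only [hcdf, hx]
    rfl
  rw [hIic, ← hSklar, hSklar']
end

section
/- Sklar's theorem (converse): Let ν be a copula measure on [0,1]^N and let F_1, …, F_N be CDFs of probability measures on ℝ. Then there exists a probability measure μ on ℝ^N whose joint CDF equals the function H(x) = ν{u : u_i ≤ F_i(x_i) for all i}, and whose i-th marginal CDF equals F_i for every i = 1, …, N. -/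
open MeasureTheory

/-! Push `ν` forward along the quantile transform `u ↦ (Qᵢ uᵢ)ᵢ`, where `Qᵢ` is the generalized
inverse of `Fᵢ`. Right continuity of `Fᵢ` gives the Galois connection `Qᵢ t ≤ x ↔ t ≤ Fᵢ x` for
`t ∈ (0,1)`, and the uniform marginals of `ν` make `(0,1)^N` a set of full `ν`-measure, so the
image measure has joint CDF `x ↦ ν {u | ∀ i, uᵢ ≤ Fᵢ xᵢ}`. Its `i`-th marginal is the image of the
uniform law under `Qᵢ`, which is `Pᵢ` (inverse transform sampling). -/

open ProbabilityTheory Set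

theorem StieltjesFunction.csInf_le_iff_le_apply (f : StieltjesFunction ℝ) {t : ℝ}
    (hne : {x | t ≤ f x}.Nonempty) (hbdd : BddBelow {x | t ≤ f x}) (x : ℝ) :
    sInf {x | t ≤ f x} ≤ x ↔ t ≤ f x := by
  refine ⟨fun h => le_trans ?_ (f.mono h), fun h => csInf_le hbdd h⟩
  rw [← f.iInf_Ioi_eq]
  refine le_ciInf fun r => ?_
  obtain ⟨s, hs, hsr⟩ := exists_lt_of_csInf_lt hne r.2
  exact hs.trans (f.mono hsr.le)

theorem ae_restrict_Icc_mem_Ioo {a b : ℝ} : ∀ᵐ t ∂volume.restrict (Icc a b), t ∈ Ioo a b := by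
  filter_upwards [ae_restrict_mem measurableSet_Icc,
    ae_restrict_of_ae (Ioo_ae_eq_Icc (μ := volume) (a := a) (b := b))] with t ht hIoo
  exact hIoo.to_iff.mpr ht

namespace ProbabilityTheory

-- Only the values on `(0,1)` matter; `0` elsewhere is a junk value.
noncomputable def quantile (μ : Measure ℝ) (t : ℝ) : ℝ :=
  if t ∈ Ioo 0 1 then sInf {x | t ≤ cdf μ x} else 0

variable (μ : Measure ℝ)

theorem quantile_le_iff {t : ℝ} (ht : t ∈ Ioo 0 1) (x : ℝ) :
    quantile μ t ≤ x ↔ t ≤ cdf μ x := by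
  rw [quantile, if_pos ht]
  refine (cdf μ).csInf_le_iff_le_apply ?_ ?_ x
  · exact ((tendsto_cdf_atTop μ).eventually_const_le ht.2).exists
  · obtain ⟨y, hy⟩ := ((tendsto_cdf_atBot μ).eventually_lt_const ht.1).exists
    exact ⟨y, fun z hz => le_of_lt <| (monotone_cdf μ).reflect_lt (hy.trans_le hz)⟩

theorem measurable_quantile : Measurable (quantile μ) := by
  refine measurable_of_Iic fun x => ?_
  have hpre : quantile μ ⁻¹' Iic x =
      Ioo 0 1 ∩ Iic (cdf μ x) ∪ (Ioo 0 1)ᶜ ∩ {_t | 0 ≤ x} := by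
    ext t
    by_cases ht : t ∈ Ioo (0 : ℝ) 1
    · simp [ht, quantile_le_iff μ ht]
    · simp [ht, quantile]
  rw [hpre]
  exact (measurableSet_Ioo.inter measurableSet_Iic).union
    (measurableSet_Ioo.compl.inter (MeasurableSet.const _))

theorem map_quantile_volume_restrict_Icc [IsProbabilityMeasure μ] :
    (volume.restrict (Icc (0 : ℝ) 1)).map (quantile μ) = μ := by
  refine Measure.ext_of_Iic _ _ fun x => ?_
  have hpre : quantile μ ⁻¹' Iic x =ᵐ[volume.restrict (Icc (0 : ℝ) 1)] Iic (cdf μ x) := by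
    filter_upwards [ae_restrict_Icc_mem_Ioo] with t ht
    exact propext (quantile_le_iff μ ht x)
  rw [Measure.map_apply (measurable_quantile μ) measurableSet_Iic, measure_congr hpre,
    Measure.restrict_apply measurableSet_Iic, inter_comm, ← Ici_inter_Iic,
    inter_assoc, Iic_inter_Iic, Ici_inter_Iic, Real.volume_Icc, sub_zero,
    min_eq_right (cdf_le_one μ x), ofReal_cdf]

end ProbabilityTheory

theorem ae_forall_mem_Ioo_of_map_eval_eq_uniform {ι : Type*} [Countable ι]
    {ν : Measure (ι → ℝ)} (hmarg : ∀ i, ν.map (fun u => u i) = volume.restrict (Icc (0 : ℝ) 1)) :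
    ∀ᵐ u ∂ν, ∀ i, u i ∈ Ioo 0 1 := by
  refine ae_all_iff.2 fun i => ae_of_ae_map (measurable_pi_apply i).aemeasurable ?_
  rw [hmarg i]
  exact ae_restrict_Icc_mem_Ioo

/-- Sklar's theorem (converse): given a copula measure `ν` on `[0,1]^N` and CDFs `Fᵢ` of
probability measures `P i` on `ℝ`, there is a probability measure `μ` on `ℝ^N` whose joint
CDF is `x ↦ ν {u | ∀ i, u i ≤ Fᵢ (x i)}` and whose `i`-th marginal CDF equals `Fᵢ`. -/
theorem sklar_converse (N : ℕ) (ν : Measure (Fin N → ℝ)) (hν : IsCopulaMeasure N ν)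
    (P : Fin N → Measure ℝ) [∀ i, IsProbabilityMeasure (P i)]
    (F : Fin N → ℝ → ℝ) (hF : ∀ i x, F i x = (P i (Set.Iic x)).toReal) :
    ∃ μ : Measure (Fin N → ℝ), IsProbabilityMeasure μ ∧
      (∀ x : Fin N → ℝ,
        (μ {y | ∀ i, y i ≤ x i}).toReal = (ν {u | ∀ i, u i ≤ F i (x i)}).toReal) ∧
      ∀ i : Fin N, ∀ x : ℝ, ((μ.map fun y => y i) (Set.Iic x)).toReal = F i x := by
  obtain ⟨hprob, -, hmarg⟩ := hν
  have hF_cdf (i : Fin N) (x : ℝ) : F i x = cdf (P i) x := by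
    rw [hF, cdf_eq_real, measureReal_def]
  let G : (Fin N → ℝ) → Fin N → ℝ := fun u i => quantile (P i) (u i)
  have hG : Measurable G :=
    measurable_pi_lambda _ fun i => (measurable_quantile _).comp (measurable_pi_apply i)
  refine ⟨ν.map G, Measure.isProbabilityMeasure_map hG.aemeasurable, fun x => ?_, fun i x => ?_⟩
  · have hpre : G ⁻¹' Iic x =ᵐ[ν] {u | ∀ i, u i ≤ F i (x i)} := by
      filter_upwards [ae_forall_mem_Ioo_of_map_eval_eq_uniform hmarg] with u hu
      simp only [hF_cdf]
      exact propext (forall_congr' fun i => quantile_le_iff _ (hu i) (x i))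
    rw [← measure_congr hpre, ← Measure.map_apply hG measurableSet_Iic]
    rfl
  · have hmarg_map : (ν.map G).map (fun y => y i) = P i := by
      rw [Measure.map_map (measurable_pi_apply i) hG,
        show (fun y => y i) ∘ G = quantile (P i) ∘ fun u => u i from rfl,
        ← Measure.map_map (measurable_quantile _) (measurable_pi_apply i), hmarg i,
        map_quantile_volume_restrict_Icc]
    rw [hmarg_map, hF]
end

section
/- Multivariate invariance of the copula under strictly increasing transformations: Let X_1, …, X_N be real random variables on a common probability space with CDFs F_{X_1}, …, F_{X_N}, and let ν be a copula measure on [0,1]^N such that for all x ∈ ℝ^N, P(X_n ≤ x_n for all n) = ν{u : u_n ≤ F_{X_n}(x_n) for all n}. Let g_1, …, g_N : ℝ → ℝ be strictly increasing bijections of ℝ. Then the same copula measure ν satisfies the Sklar equation for (g_1(X_1), …, g_N(X_N)): for all y ∈ ℝ^N, P(g_n(X_n) ≤ y_n for all n) = ν{u : u_n ≤ F_{g_n(X_n)}(y_n) for all n}, where F_{g_n(X_n)} is the CDF of g_n(X_n). -/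
open MeasureTheory

theorem copula_invariance_strictMono_multivariate_general {Ω : Type*} [MeasurableSpace Ω]
    (P : Measure Ω) (N : ℕ)
    (X : Fin N → Ω → ℝ)
    (ν : Measure (Fin N → ℝ))
    (hSklar : ∀ x : Fin N → ℝ,
      P {ω | ∀ n, X n ω ≤ x n} =
        ν {u | ∀ n, u n ≤ (P {ω | X n ω ≤ x n}).toReal})
    (g : Fin N → ℝ → ℝ) (hg : ∀ n, StrictMono (g n))
    (hgb : ∀ n, Function.Bijective (g n)) :
    ∀ y : Fin N → ℝ,
      P {ω | ∀ n, g n (X n ω) ≤ y n} =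
        ν {u | ∀ n, u n ≤ (P {ω | g n (X n ω) ≤ y n}).toReal} := by
  intro y
  choose x hx using fun n => (hgb n).surjective (y n)
  simp only [← hx, (hg _).le_iff_le]
  exact hSklar x

/-- Multivariate invariance of the copula under strictly increasing transformations:
if `ν` is a copula for `(X_1, …, X_N)` (i.e. it satisfies the Sklar equation with the
marginal CDFs of the `X_n`), and `g_1, …, g_N` are strictly increasing bijections of `ℝ`,
then the same `ν` satisfies the Sklar equation for `(g_1(X_1), …, g_N(X_N))` with the
marginal CDFs of the `g_n(X_n)`. -/
theorem copula_invariance_strictMono_multivariate {Ω : Type*} [MeasurableSpace Ω]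
    (P : Measure Ω) [IsProbabilityMeasure P] (N : ℕ)
    (X : Fin N → Ω → ℝ) (hX : ∀ n, Measurable (X n))
    (ν : Measure (Fin N → ℝ)) (hν : IsCopulaMeasure N ν)
    (hSklar : ∀ x : Fin N → ℝ,
      P {ω | ∀ n, X n ω ≤ x n} =
        ν {u | ∀ n, u n ≤ (P {ω | X n ω ≤ x n}).toReal})
    (g : Fin N → ℝ → ℝ) (hg : ∀ n, StrictMono (g n))
    (hgb : ∀ n, Function.Bijective (g n)) :
    ∀ y : Fin N → ℝ,
      P {ω | ∀ n, g n (X n ω) ≤ y n} =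
        ν {u | ∀ n, u n ≤ (P {ω | g n (X n ω) ≤ y n}).toReal} :=
  copula_invariance_strictMono_multivariate_general P N X ν hSklar g hg hgb
end

section
/- Widrow's sampling identity for quantization: Let q > 0 and let X be a real random variable with probability density function f (with respect to Lebesgue measure). Let Q_q(x) = q⌊x/q⌋ + q/2 be the uniform quantizer with step size q, and let f_W(x) = (1/q)·1_{[−q/2, q/2]}(x) be the density of the uniform distribution on [−q/2, q/2]. Then for every integer k, P(Q_q(X) = kq + q/2) = q · (f_W ⋆ f)(kq + q/2), where ⋆ denotes convolution of functions on ℝ; that is, the probability mass function of the quantizer output is obtained by sampling the convolution f_W ⋆ f at the quantizer output levels and scaling by q. -/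
/-!
The quantizer outputs `k q + q/2` exactly when `X ∈ [k q, k q + q)`, so the left side is
`∫_{[kq, kq+q)} f`. On the other side, `x ↦ f_W (k q + q/2 - x)` is `1/q` times the indicator
of `[k q, k q + q]`, so `q (f_W ⋆ f)(k q + q/2)` is the same integral, the endpoint being null.
-/

open MeasureTheory

/-- The (infinite-level) uniform quantizer with step size `q`. -/
noncomputable def uniformQuantizer (q : ℝ) (x : ℝ) : ℝ := q * ⌊x / q⌋ + q / 2

open Set

theorem uniformQuantizer_eq_iff {q : ℝ} (hq : 0 < q) (x : ℝ) (k : ℤ) :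
    uniformQuantizer q x = k * q + q / 2 ↔ x ∈ Ico (k * q) (k * q + q) := by
  have hfloor : uniformQuantizer q x = k * q + q / 2 ↔ ⌊x / q⌋ = k := by
    rw [uniformQuantizer, add_left_inj, mul_comm, mul_left_inj' hq.ne', Int.cast_inj]
  rw [hfloor, Int.floor_eq_iff, le_div_iff₀ hq, div_lt_iff₀ hq, add_one_mul, mem_Ico]

theorem measure_preimage_eq_ofReal_setIntegral {α Ω : Type*} [MeasurableSpace α]
    [MeasurableSpace Ω] {P : Measure Ω} [IsFiniteMeasure P] {μ : Measure α} {X : Ω → α}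
    (hX : Measurable X) {f : α → ℝ} (hf_nonneg : 0 ≤ f) (hf_meas : AEStronglyMeasurable f μ)
    (hpdf : P.map X = μ.withDensity fun x => ENNReal.ofReal (f x))
    {s : Set α} (hs : MeasurableSet s) :
    P (X ⁻¹' s) = ENNReal.ofReal (∫ x in s, f x ∂μ) := by
  have hf_nonneg_ae : 0 ≤ᵐ[μ.restrict s] f := Filter.Eventually.of_forall hf_nonneg
  have hmass : P (X ⁻¹' s) = ∫⁻ x in s, ENNReal.ofReal (f x) ∂μ := by
    rw [← Measure.map_apply hX hs, hpdf, withDensity_apply _ hs]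
  have hint : IntegrableOn f s μ :=
    ⟨hf_meas.restrict, (hasFiniteIntegral_iff_ofReal hf_nonneg_ae).mpr
      (hmass ▸ measure_lt_top P _)⟩
  rw [hmass, ofReal_integral_eq_lintegral_ofReal hint hf_nonneg_ae]

theorem integral_indicator_Icc_sub_mul (a h b : ℝ) (f : ℝ → ℝ) :
    ∫ x, (Icc (-h) h).indicator (fun _ => b) (a - x) * f x
      = b * ∫ x in Icc (a - h) (a + h), f x := by
  have hkernel : ∀ x, (Icc (-h) h).indicator (fun _ => b) (a - x) * f x
      = (Icc (a - h) (a + h)).indicator (fun y => b * f y) x := by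
    intro x
    rw [← indicator_comp_right (fun x => a - x), preimage_const_sub_Icc, sub_neg_eq_add,
      indicator_mul_left]
    rfl
  simp_rw [hkernel]
  rw [integral_indicator measurableSet_Icc, integral_const_mul]

/-- Widrow's sampling identity for quantization: if `X` has density `f`, then the
probability mass of the quantizer output at the level `k q + q/2` equals `q` times the
convolution of `f` with the uniform density `f_W` on `[-q/2, q/2]`, sampled at that
level. -/
theorem widrow_sampling_identity (q : ℝ) (hq : 0 < q)
    {Ω : Type*} [MeasurableSpace Ω] (P : Measure Ω) [IsProbabilityMeasure P]
    (X : Ω → ℝ) (hX : Measurable X)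
    (f : ℝ → ℝ) (hf_nonneg : 0 ≤ f) (hf_meas : Measurable f)
    (hpdf : P.map X = volume.withDensity fun x => ENNReal.ofReal (f x))
    (fW : ℝ → ℝ)
    (hfW : fW = (Set.Icc (-(q / 2)) (q / 2)).indicator fun _ => 1 / q)
    (k : ℤ) :
    P {ω | uniformQuantizer q (X ω) = k * q + q / 2} =
      ENNReal.ofReal (q * ∫ x : ℝ, fW (k * q + q / 2 - x) * f x) := by
  have hevent : {ω | uniformQuantizer q (X ω) = k * q + q / 2} = X ⁻¹' Ico (k * q) (k * q + q) :=
    ext fun ω => uniformQuantizer_eq_iff hq (X ω) k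
  rw [hevent, measure_preimage_eq_ofReal_setIntegral hX hf_nonneg hf_meas.aestronglyMeasurable
    hpdf measurableSet_Ico, hfW, integral_indicator_Icc_sub_mul, add_sub_cancel_right,
    add_assoc, add_halves, one_div, mul_inv_cancel_left₀ hq.ne', integral_Icc_eq_integral_Ico]
end

section
/- Kendall's tau formula via the copula (Nelsen, p.161): Let (X, Y) be a pair of real random variables with continuous marginal CDFs F_X and F_Y, and let ν be a copula measure on [0,1]² with CDF C(u, v) = ν{w : w_1 ≤ u, w_2 ≤ v} satisfying the Sklar equation P(X ≤ x, Y ≤ y) = C(F_X(x), F_Y(y)) for all x, y ∈ ℝ. Let (X′, Y′) be an independent copy of (X, Y) (independent of (X, Y) and with the same joint distribution). Then Kendall's tau of (X, Y) satisfies τ = P((X − X′)(Y − Y′) > 0) − P((X − X′)(Y − Y′) < 0) = 4 · E[C(F_X(X), F_Y(Y))] − 1. -/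
/-!
Let `μ` be the law of `(X, Y)`; the pair of the two copies has law `μ ⊗ μ`. Continuity of the
marginal CDFs makes ties `X = X'` or `Y = Y'` null, so concordance and discordance have total
probability one and `τ = 2 P(concordant) - 1`. By the symmetry `(X, Y) ↔ (X', Y')`, a concordant
pair is equally likely to have `(X', Y')` strictly below `(X, Y)` as above it, and by Fubini the
former has probability `∫ μ (Iio x ×ˢ Iio y) dμ(x, y) = ∫ μ (Iic (x, y)) dμ(x, y)`, again because
ties are null. The Sklar equation identifies `μ (Iic (x, y))` with `C (F_X x) (F_Y y)`.
-/

open MeasureTheory ProbabilityTheory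

/-- A copula measure on `[0,1]²`: a probability measure on `ℝ × ℝ` concentrated on the unit
square whose two one-dimensional marginals are both uniform on `[0,1]`. -/
def IsCopulaMeasure2 (ν : Measure (ℝ × ℝ)) : Prop :=
  IsProbabilityMeasure ν ∧
    ν (Set.Icc (0 : ℝ) 1 ×ˢ Set.Icc (0 : ℝ) 1) = 1 ∧
    ν.map Prod.fst = volume.restrict (Set.Icc (0 : ℝ) 1) ∧
    ν.map Prod.snd = volume.restrict (Set.Icc (0 : ℝ) 1)

open Set

lemma measure_singleton_eq_zero_of_continuous_cdf (μ : Measure ℝ) [IsProbabilityMeasure μ]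
    (h : Continuous (cdf μ)) (a : ℝ) : μ {a} = 0 := by
  rw [← measure_cdf μ, StieltjesFunction.measure_singleton, h.continuousWithinAt.leftLim_eq,
    sub_self, ENNReal.ofReal_zero]

lemma measure_preimage_singleton_eq_zero_of_continuous_cdf {Ω : Type*} [MeasurableSpace Ω]
    (P : Measure Ω) [IsProbabilityMeasure P] {X : Ω → ℝ} (hX : Measurable X)
    (hF : Continuous fun x => P.real {ω | X ω ≤ x}) (a : ℝ) : P (X ⁻¹' {a}) = 0 := by
  have : IsProbabilityMeasure (P.map X) := Measure.isProbabilityMeasure_map hX.aemeasurable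
  have hcdf : cdf (P.map X) = fun x => P.real {ω | X ω ≤ x} := funext fun x => by
    rw [cdf_eq_real, map_measureReal_apply hX measurableSet_Iic]; rfl
  rw [← Measure.map_apply hX (measurableSet_singleton a)]
  exact measure_singleton_eq_zero_of_continuous_cdf _ (hcdf ▸ hF) a

lemma measure_prod_self_setOf_eq_eq_zero {α : Type*} [MeasurableSpace α] (μ : Measure α)
    [SFinite μ] {f : α → ℝ} (hf : Measurable f) (h : ∀ a, μ (f ⁻¹' {a}) = 0) :
    (μ.prod μ) {p | f p.1 = f p.2} = 0 := by
  refine (Measure.measure_prod_null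
    (measurableSet_eq_fun (hf.comp measurable_fst) (hf.comp measurable_snd))).2 ?_
  refine Filter.Eventually.of_forall fun x => ?_
  have hsection : Prod.mk x ⁻¹' {p | f p.1 = f p.2} = f ⁻¹' {f x} := by
    ext y; exact eq_comm
  exact (congrArg μ hsection).trans (h (f x))

def concordanceProduct (p : (ℝ × ℝ) × (ℝ × ℝ)) : ℝ :=
  (p.1.1 - p.2.1) * (p.1.2 - p.2.2)

def concordantPairs : Set ((ℝ × ℝ) × (ℝ × ℝ)) :=
  {p | 0 < concordanceProduct p}

def discordantPairs : Set ((ℝ × ℝ) × (ℝ × ℝ)) :=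
  {p | concordanceProduct p < 0}

def strictlyBelowPairs : Set ((ℝ × ℝ) × (ℝ × ℝ)) :=
  {p | p.2 ∈ Iio p.1.1 ×ˢ Iio p.1.2}

lemma measurable_concordanceProduct : Measurable concordanceProduct := by
  unfold concordanceProduct
  fun_prop

lemma measurableSet_concordantPairs : MeasurableSet concordantPairs :=
  measurableSet_lt measurable_const measurable_concordanceProduct

lemma measurableSet_discordantPairs : MeasurableSet discordantPairs :=
  measurableSet_lt measurable_concordanceProduct measurable_const

lemma measurableSet_strictlyBelowPairs : MeasurableSet strictlyBelowPairs :=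
  (measurableSet_lt (by fun_prop) (by fun_prop)).inter
    (measurableSet_lt (by fun_prop) (by fun_prop))

lemma concordantPairs_eq_union :
    concordantPairs = strictlyBelowPairs ∪ Prod.swap ⁻¹' strictlyBelowPairs := by
  ext p
  simp only [concordantPairs, strictlyBelowPairs, concordanceProduct, mul_pos_iff, sub_pos, sub_neg, mem_union,
    mem_preimage, Prod.fst_swap, Prod.snd_swap, mem_ofPred_eq, mem_prod, mem_Iio]

lemma disjoint_strictlyBelowPairs_swap :
    Disjoint strictlyBelowPairs (Prod.swap ⁻¹' strictlyBelowPairs) :=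
  disjoint_left.2 fun _ h h' => lt_asymm (mem_Iio.1 h.1) (mem_Iio.1 h'.1)

lemma setOf_concordanceProduct_eq_zero_subset :
    {p | concordanceProduct p = 0} ⊆ {p | p.1.1 = p.2.1} ∪ {p | p.1.2 = p.2.2} :=
  fun _ hp => by simpa only [concordanceProduct, mul_eq_zero, sub_eq_zero, mem_union, mem_ofPred_eq] using hp

lemma concordantPairs_union_discordantPairs :
    concordantPairs ∪ discordantPairs = {p | concordanceProduct p = 0}ᶜ := by
  ext p
  simp only [concordantPairs, discordantPairs, mem_union, mem_compl_iff, mem_ofPred_eq]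
  exact ⟨fun h => h.elim ne_of_gt ne_of_lt, fun h => (lt_or_gt_of_ne h).symm⟩

lemma disjoint_concordantPairs_discordantPairs : Disjoint concordantPairs discordantPairs :=
  disjoint_left.2 fun _ h h' => lt_asymm (α := ℝ) h h'

section

variable (μ : Measure (ℝ × ℝ))

lemma measure_prod_concordantPairs [SFinite μ] :
    (μ.prod μ) concordantPairs = 2 * (μ.prod μ) strictlyBelowPairs := by
  have hswap : (μ.prod μ) (Prod.swap ⁻¹' strictlyBelowPairs) = (μ.prod μ) strictlyBelowPairs := by
    rw [← Measure.map_apply measurable_swap measurableSet_strictlyBelowPairs, Measure.prod_swap]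
  rw [concordantPairs_eq_union, measure_union disjoint_strictlyBelowPairs_swap
    (measurable_swap measurableSet_strictlyBelowPairs), hswap, two_mul]

lemma measurable_measure_Iic [SFinite μ] : Measurable fun q : ℝ × ℝ => μ (Iic q) :=
  measurable_measure_prodMk_left (measurableSet_le measurable_snd measurable_fst)

variable {μ} (hfst : ∀ a, μ (Prod.fst ⁻¹' {a}) = 0) (hsnd : ∀ b, μ (Prod.snd ⁻¹' {b}) = 0)
include hfst hsnd

lemma measure_Iio_prod_Iio_eq_measure_Iic (q : ℝ × ℝ) : μ (Iio q.1 ×ˢ Iio q.2) = μ (Iic q) := by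
  rw [Iic_prod_eq, ← measure_sdiff_null (s := Iic q.1 ×ˢ Iic q.2)
    (measure_union_null (hfst q.1) (hsnd q.2))]
  congr 1
  ext r
  simp only [mem_prod, mem_Iio, mem_Iic, mem_sdiff, mem_union, mem_preimage, mem_singleton_iff,
    lt_iff_le_and_ne]
  tauto

lemma measure_prod_strictlyBelowPairs [SFinite μ] :
    (μ.prod μ) strictlyBelowPairs = ∫⁻ q, μ (Iic q) ∂μ := by
  rw [Measure.prod_apply measurableSet_strictlyBelowPairs]
  exact lintegral_congr (measure_Iio_prod_Iio_eq_measure_Iic hfst hsnd)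

lemma measureReal_prod_concordantPairs_add_discordantPairs [IsProbabilityMeasure μ] :
    (μ.prod μ).real concordantPairs + (μ.prod μ).real discordantPairs = 1 := by
  have hties : (μ.prod μ) {p | concordanceProduct p = 0} = 0 :=
    measure_mono_null setOf_concordanceProduct_eq_zero_subset <| measure_union_null
      (measure_prod_self_setOf_eq_eq_zero μ measurable_fst hfst)
      (measure_prod_self_setOf_eq_eq_zero μ measurable_snd hsnd)
  rw [← measureReal_union disjoint_concordantPairs_discordantPairs measurableSet_discordantPairs,
    concordantPairs_union_discordantPairs,
    probReal_compl_eq_one_sub (measurableSet_eq_fun measurable_concordanceProduct measurable_const),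
    measureReal_def, hties, ENNReal.toReal_zero, sub_zero]

theorem measureReal_prod_concordantPairs_sub_discordantPairs [IsProbabilityMeasure μ] :
    (μ.prod μ).real concordantPairs - (μ.prod μ).real discordantPairs =
      4 * ∫ q, μ.real (Iic q) ∂μ - 1 := by
  have hint : ∫ q, μ.real (Iic q) ∂μ = (μ.prod μ).real strictlyBelowPairs := by
    rw [measureReal_def, measure_prod_strictlyBelowPairs hfst hsnd]
    exact integral_toReal (measurable_measure_Iic μ).aemeasurable
      (Filter.Eventually.of_forall fun _ => measure_lt_top μ _)
  have hconc : (μ.prod μ).real concordantPairs = 2 * (μ.prod μ).real strictlyBelowPairs := by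
    rw [measureReal_def, measure_prod_concordantPairs, ENNReal.toReal_mul]; rfl
  linarith [measureReal_prod_concordantPairs_add_discordantPairs hfst hsnd]

end

theorem kendall_tau_copula_general
    {Ω : Type*} [MeasurableSpace Ω] (P : Measure Ω) [IsProbabilityMeasure P]
    (X Y X' Y' : Ω → ℝ) (hX : Measurable X) (hY : Measurable Y)
    (hX' : Measurable X') (hY' : Measurable Y')
    (F_X F_Y : ℝ → ℝ)
    (hFX : ∀ x, F_X x = (P {ω | X ω ≤ x}).toReal)
    (hFY : ∀ y, F_Y y = (P {ω | Y ω ≤ y}).toReal)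
    (hFXcont : Continuous F_X) (hFYcont : Continuous F_Y)
    (C : ℝ → ℝ → ℝ)
    (hSklar : ∀ x y : ℝ,
      (P {ω | X ω ≤ x ∧ Y ω ≤ y}).toReal = C (F_X x) (F_Y y))
    (hcopy : P.map (fun ω => (X' ω, Y' ω)) = P.map (fun ω => (X ω, Y ω)))
    (hindep : IndepFun (fun ω => (X ω, Y ω)) (fun ω => (X' ω, Y' ω)) P) :
    (P {ω | (X ω - X' ω) * (Y ω - Y' ω) > 0}).toReal -
        (P {ω | (X ω - X' ω) * (Y ω - Y' ω) < 0}).toReal =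
      4 * (∫ ω, C (F_X (X ω)) (F_Y (Y ω)) ∂P) - 1 := by
  have hXY : Measurable fun ω => (X ω, Y ω) := hX.prodMk hY
  set μ := P.map fun ω => (X ω, Y ω)
  have : IsProbabilityMeasure μ := Measure.isProbabilityMeasure_map hXY.aemeasurable
  have hpairs : P.map (fun ω => ((X ω, Y ω), (X' ω, Y' ω))) = μ.prod μ := by
    rw [(indepFun_iff_map_prod_eq_prod_map_map hXY.aemeasurable
      (hX'.prodMk hY').aemeasurable).1 hindep, hcopy]
  have hfst (a : ℝ) : μ (Prod.fst ⁻¹' {a}) = 0 := by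
    rw [Measure.map_apply hXY (measurable_fst (measurableSet_singleton a))]
    exact measure_preimage_singleton_eq_zero_of_continuous_cdf P hX (funext hFX ▸ hFXcont) a
  have hsnd (b : ℝ) : μ (Prod.snd ⁻¹' {b}) = 0 := by
    rw [Measure.map_apply hXY (measurable_snd (measurableSet_singleton b))]
    exact measure_preimage_singleton_eq_zero_of_continuous_cdf P hY (funext hFY ▸ hFYcont) b
  have hC (q : ℝ × ℝ) : C (F_X q.1) (F_Y q.2) = μ.real (Iic q) := by
    rw [← hSklar, map_measureReal_apply hXY measurableSet_Iic]; rfl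
  have hpairs_real (s) (hs : MeasurableSet s) :
      (μ.prod μ).real s = P.real ((fun ω => ((X ω, Y ω), (X' ω, Y' ω))) ⁻¹' s) := by
    rw [← hpairs, map_measureReal_apply (hXY.prodMk (hX'.prodMk hY')) hs]
  have hintegral : ∫ ω, C (F_X (X ω)) (F_Y (Y ω)) ∂P = ∫ q, μ.real (Iic q) ∂μ := by
    refine (integral_congr_ae (ae_of_all _ fun ω => hC (X ω, Y ω))).trans ?_
    exact (integral_map hXY.aemeasurable
      (measurable_measure_Iic μ).ennreal_toReal.aestronglyMeasurable).symm
  rw [hintegral, ← measureReal_prod_concordantPairs_sub_discordantPairs hfst hsnd,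
    hpairs_real _ measurableSet_concordantPairs, hpairs_real _ measurableSet_discordantPairs]
  rfl

/-- Kendall's tau formula via the copula (Nelsen, p. 161): if `(X, Y)` has continuous
marginal CDFs `F_X`, `F_Y` and copula `ν` with CDF `C` satisfying the Sklar equation, and
`(X', Y')` is an independent copy of `(X, Y)`, then Kendall's tau
`τ = P((X - X')(Y - Y') > 0) - P((X - X')(Y - Y') < 0)` equals
`4 E[C(F_X(X), F_Y(Y))] - 1`. -/
theorem kendall_tau_copula
    {Ω : Type*} [MeasurableSpace Ω] (P : Measure Ω) [IsProbabilityMeasure P]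
    (X Y X' Y' : Ω → ℝ) (hX : Measurable X) (hY : Measurable Y)
    (hX' : Measurable X') (hY' : Measurable Y')
    (F_X F_Y : ℝ → ℝ)
    (hFX : ∀ x, F_X x = (P {ω | X ω ≤ x}).toReal)
    (hFY : ∀ y, F_Y y = (P {ω | Y ω ≤ y}).toReal)
    (hFXcont : Continuous F_X) (hFYcont : Continuous F_Y)
    (ν : Measure (ℝ × ℝ)) (hν : IsCopulaMeasure2 ν)
    (C : ℝ → ℝ → ℝ)
    (hC : ∀ u v : ℝ, C u v = (ν {w | w.1 ≤ u ∧ w.2 ≤ v}).toReal)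
    (hSklar : ∀ x y : ℝ,
      (P {ω | X ω ≤ x ∧ Y ω ≤ y}).toReal = C (F_X x) (F_Y y))
    (hcopy : P.map (fun ω => (X' ω, Y' ω)) = P.map (fun ω => (X ω, Y ω)))
    (hindep : IndepFun (fun ω => (X ω, Y ω)) (fun ω => (X' ω, Y' ω)) P) :
    (P {ω | (X ω - X' ω) * (Y ω - Y' ω) > 0}).toReal -
        (P {ω | (X ω - X' ω) * (Y ω - Y' ω) < 0}).toReal =
      4 * (∫ ω, C (F_X (X ω)) (F_Y (Y ω)) ∂P) - 1 :=
  kendall_tau_copula_general P X Y X' Y' hX hY hX' hY' F_X F_Y hFX hFY hFXcont hFYcont C hSklar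
    hcopy hindep
end
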